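/- arXiv:2009.06552 — 2 statements merged into one kernel-verified Lean document; each statement's English description precedes it below -/
import Mathlib

section
/- Let ρ ∈ (0,1). There exists θ = θ(ρ) ∈ (0,1) such that: if I is an interval of length λ > 1 partitioned into finitely many 'good' and 'bad' subintervals J₁,…,Jₙ satisfying (1) any two good intervals Jᵢ, Jⱼ satisfy d(Jᵢ,Jⱼ) ≥ (min{|Jᵢ|,|Jⱼ|})^{1+ρ}, (2) every good interval has length at most (3/4)λ, and (3) every bad interval has length at least 1, then the total length of the bad intervals is at least θλ. -/
/-!
Between two good intervals of positive length there is a bad one, so if `B` is the total bad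
length there are at most `B + 1` good intervals of positive length. Listed by decreasing length
`ℓ₁ ≥ ℓ₂ ≥ ⋯`, the first `r + 1` of them are pairwise separated by gaps of at least
`ℓᵣ₊₁ ^ (1 + ρ)`, so `r ℓᵣ₊₁ ^ (1 + ρ) ≤ λ`. Summing `ℓᵣ₊₁ ≤ (λ / r) ^ (1 - β)`, with
`β = ρ / (1 + ρ)`, bounds the good length by `(3/4) λ + λ ^ (1 - β) B ^ β / β`, and since good
and bad lengths add up to `λ`, this forces `B ≥ (β / 8) ^ (1 / β) λ`.
-/

open Finset

theorem Real.mul_rpow_sub_one_mul_sub_le {β x y : ℝ} (hβ0 : 0 ≤ β) (hβ1 : β ≤ 1) (hx : 0 ≤ x)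
    (hy : 0 < y) : β * y ^ (β - 1) * (y - x) ≤ y ^ β - x ^ β := by
  have bernoulli := rpow_one_add_le_one_add_mul_self
    (s := (x - y) / y) (by rw [le_div_iff₀ hy]; linarith) hβ0 hβ1
  have hxy : 1 + (x - y) / y = x / y := by field_simp; ring
  rw [hxy, Real.div_rpow hx hy.le, div_le_iff₀ (by positivity)] at bernoulli
  rw [Real.rpow_sub_one hy.ne']
  have : (1 + β * ((x - y) / y)) * y ^ β = y ^ β - β * (y ^ β / y) * (y - x) := by
    field_simp; ring
  linarith

theorem sum_Icc_rpow_sub_one_le {β : ℝ} (hβ0 : 0 < β) (hβ1 : β ≤ 1) (m : ℕ) :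
    ∑ r ∈ Icc 1 m, (r : ℝ) ^ (β - 1) ≤ (m : ℝ) ^ β / β := by
  induction m with
  | zero => simp [Real.zero_rpow hβ0.ne']
  | succ m ih =>
    have step := Real.mul_rpow_sub_one_mul_sub_le hβ0.le hβ1 (Nat.cast_nonneg m)
      (Nat.cast_add_one_pos m)
    rw [add_sub_cancel_left, mul_one] at step
    rw [sum_Icc_succ_top (by omega), Nat.cast_succ, le_div_iff₀ hβ0, add_mul]
    rw [le_div_iff₀ hβ0] at ih
    linarith

theorem Finset.card_le_card_add_one_of_exists_between {α : Type*} [LinearOrder α]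
    {s t : Finset α} (h : ∀ x ∈ s, ∀ y ∈ s, x < y → ∃ z ∈ t, x < z ∧ z < y) :
    #s ≤ #t + 1 := by
  induction s using Finset.induction_on_max generalizing t with
  | empty => simp
  | insert a s hlt ih =>
    rw [card_insert_of_notMem fun ha => (hlt a ha).false]
    rcases s.eq_empty_or_nonempty with rfl | hne
    · simp
    obtain ⟨z, hzt, hmz, hza⟩ := h _ (mem_insert_of_mem (s.max'_mem hne)) a (mem_insert_self a s)
      (hlt _ (s.max'_mem hne))
    have := ih (t := t.erase z) fun x hx y hy hxy => by
      obtain ⟨w, hwt, hxw, hwy⟩ := h x (mem_insert_of_mem hx) y (mem_insert_of_mem hy) hxy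
      exact ⟨w, mem_erase.2 ⟨(hwy.trans_le ((s.le_max' y hy).trans hmz.le)).ne, hwt⟩, hxw, hwy⟩
    rw [card_erase_of_mem hzt] at this
    have := card_pos.2 ⟨z, hzt⟩
    omega

theorem Finset.card_sub_one_mul_le_sub {α : Type*} [LinearOrder α] {s : Finset α}
    (hs : s.Nonempty) {f : α → ℝ} {g lo hi : ℝ}
    (hgap : ∀ x ∈ s, ∀ y ∈ s, x < y → g ≤ f y - f x) (hlo : ∀ x ∈ s, lo ≤ f x)
    (hhi : ∀ x ∈ s, f x ≤ hi) : (#s - 1 : ℝ) * g ≤ hi - lo := by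
  induction s using Finset.induction_on_max generalizing hi with
  | empty => simp at hs
  | insert a s hlt ih =>
    rw [card_insert_of_notMem fun ha => (hlt a ha).false, Nat.cast_succ, add_sub_cancel_right]
    rcases s.eq_empty_or_nonempty with rfl | hne
    · simpa using (hlo a (mem_insert_self a ∅)).trans (hhi a (mem_insert_self a ∅))
    have := ih hne (hi := f a - g)
      (fun x hx y hy => hgap x (mem_insert_of_mem hx) y (mem_insert_of_mem hy))
      (fun x hx => hlo x (mem_insert_of_mem hx))
      (fun x hx => by linarith [hgap x (mem_insert_of_mem hx) a (mem_insert_self a s) (hlt x hx)])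
    linarith [hhi a (mem_insert_self a s)]

theorem Finset.sum_le_add_sum_Ico_of_forall_min_le {ι : Type*} (s : Finset ι) (ℓ : ι → ℝ)
    (c : ℕ → ℝ) {M : ℝ} (hM0 : 0 ≤ M) (hM : ∀ i ∈ s, ℓ i ≤ M)
    (hc : ∀ t ⊆ s, 1 < #t → ∀ i ∈ t, (∀ j ∈ t, ℓ i ≤ ℓ j) → ℓ i ≤ c (#t - 1)) :
    ∑ i ∈ s, ℓ i ≤ M + ∑ r ∈ Ico 1 #s, c r := by
  classical
  induction s using Finset.induction_on_min_value ℓ with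
  | empty => simpa
  | insert a s ha hmin ih =>
    have ih := ih (fun i hi => hM i (mem_insert_of_mem hi))
      (fun t ht => hc t (ht.trans (subset_insert a s)))
    rw [sum_insert ha, card_insert_of_notMem ha]
    rcases s.eq_empty_or_nonempty with rfl | hne
    · simpa using hM a (mem_insert_self a ∅)
    have hca := hc (insert a s) subset_rfl (by rw [card_insert_of_notMem ha]; simpa using hne) a
      (mem_insert_self a s) (forall_mem_insert _ _ _ |>.2 ⟨le_rfl, hmin⟩)
    rw [card_insert_of_notMem ha, add_tsub_cancel_right] at hca
    rw [sum_Ico_succ_top (card_pos.2 hne)]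
    linarith

theorem exists_mem_Ico_lt_succ_of_lt {p : ℕ → ℝ} {m m' : ℕ} (hmm' : m ≤ m') (h : p m < p m') :
    ∃ k ∈ Ico m m', p k < p (k + 1) := by
  have : ∑ k ∈ Ico m m', (0 : ℝ) < ∑ k ∈ Ico m m', (p (k + 1) - p k) := by
    rw [sum_Ico_sub p hmm']; simpa
  obtain ⟨k, hk, hlt⟩ := exists_lt_of_sum_lt this
  exact ⟨k, hk, by linarith⟩

section IntervalPartition

variable {n : ℕ} {p : ℕ → ℝ} {good : Fin n → Bool}

theorem exists_partition_points {lam : ℝ} (hn : 0 < n) {a b : Fin n → ℝ}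
    (hab : ∀ i, a i ≤ b i) (hcons : ∀ i : Fin n, ∀ h : (i : ℕ) + 1 < n, b i = a ⟨(i : ℕ) + 1, h⟩)
    (h0 : ∀ i : Fin n, (i : ℕ) = 0 → a i = 0) (hlast : ∀ i : Fin n, (i : ℕ) = n - 1 → b i = lam) :
    ∃ p : ℕ → ℝ, Monotone p ∧ p 0 = 0 ∧ p n = lam ∧
      a = (fun i : Fin n => p i) ∧ b = (fun i : Fin n => p (i + 1)) := by
  set p : ℕ → ℝ := fun k => if h : k < n then a ⟨k, h⟩ else lam
  have hpa (i : Fin n) : p i = a i := dif_pos i.isLt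
  have hpb (i : Fin n) : p (i + 1) = b i := by
    by_cases h : (i : ℕ) + 1 < n
    · exact (dif_pos h).trans (hcons i h).symm
    · exact (dif_neg h).trans (hlast i (by omega)).symm
  refine ⟨p, monotone_nat_of_le_succ fun k => ?_, (dif_pos hn).trans (h0 ⟨0, hn⟩ rfl),
    dif_neg (lt_irrefl n), funext fun i => (hpa i).symm, funext fun i => (hpb i).symm⟩
  by_cases hk : k < n
  · have := hab ⟨k, hk⟩
    rwa [← hpa, ← hpb] at this
  · simp only [p, dif_neg hk, dif_neg (by omega : ¬k + 1 < n), le_refl]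

variable (p good) in
noncomputable def posGood : Finset (Fin n) := univ.filter fun i => good i = true ∧ p i < p (i + 1)

theorem exists_bad_between_of_mem_posGood
    (hsep : ∀ i ∈ posGood p good, ∀ j ∈ posGood p good, i < j → p (i + 1) < p j) :
    ∀ i ∈ posGood p good, ∀ j ∈ posGood p good, i < j →
      ∃ k ∈ univ.filter (fun k => good k = false), i < k ∧ k < j := by
  intro i hi j
  induction j using WellFoundedLT.induction with
  | _ j ih =>
  intro hj hij
  obtain ⟨k, hk, hpk⟩ := exists_mem_Ico_lt_succ_of_lt (Fin.lt_def.1 hij) (hsep i hi j hj hij)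
  rw [mem_Ico] at hk
  set K : Fin n := ⟨k, hk.2.trans j.isLt⟩
  have hiK : i < K := Fin.lt_def.2 hk.1
  have hKj : K < j := Fin.lt_def.2 hk.2
  cases hK : good K
  · exact ⟨K, by simp [hK], hiK, hKj⟩
  · obtain ⟨z, hz, hiz, hzK⟩ := ih K hKj (by simp [posGood, hK, K, hpk]) hiK
    exact ⟨z, hz, hiz, hzK.trans hKj⟩

theorem card_posGood_le_card_bad_add_one {ρ : ℝ}
    (hgap : ∀ i j : Fin n, good i = true → good j = true → i < j →
      (min (p (i + 1) - p i) (p (j + 1) - p j)) ^ ((1:ℝ) + ρ) ≤ p j - p (i + 1)) :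
    #(posGood p good) ≤ #(univ.filter fun i => good i = false) + 1 := by
  refine card_le_card_add_one_of_exists_between (exists_bad_between_of_mem_posGood ?_)
  intro i hi j hj hij
  simp only [posGood, mem_filter, mem_univ, true_and] at hi hj
  have : 0 < min (p (i + 1) - p i) (p (j + 1) - p j) := lt_min (by linarith) (by linarith)
  linarith [hgap i j hi.1 hj.1 hij, Real.rpow_pos_of_pos this ((1:ℝ) + ρ)]

theorem sum_posGood_add_sum_bad (hp : Monotone p) :
    ∑ i ∈ posGood p good, (p (i + 1) - p i) +
      ∑ i ∈ univ.filter (fun i => good i = false), (p (i + 1) - p i) = p n - p 0 := by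
  have hgood : ∑ i ∈ posGood p good, (p (i + 1) - p i) =
      ∑ i ∈ univ.filter (fun i => good i = true), (p (i + 1) - p i) := by
    refine sum_subset (fun i hi => by simp_all [posGood]) fun i hi hi' => ?_
    have : ¬p i < p (i + 1) := fun h => hi' (by simp_all [posGood])
    linarith [hp (Nat.le_succ i), not_lt.1 this]
  rw [hgood, ← sum_range_sub, ← Fin.sum_univ_eq_sum_range (fun k => p (k + 1) - p k),
    ← sum_filter_add_sum_filter_not univ (fun i => good i = true)]
  simp only [Bool.not_eq_true]

theorem sum_posGood_le {ρ lam : ℝ} (hρ : 0 < ρ) (hp : Monotone p) (hp0 : p 0 = 0)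
    (hpn : p n = lam)
    (hgap : ∀ i j : Fin n, good i = true → good j = true → i < j →
      (min (p (i + 1) - p i) (p (j + 1) - p j)) ^ ((1:ℝ) + ρ) ≤ p j - p (i + 1))
    (hgood : ∀ i, good i = true → p (i + 1) - p i ≤ 3/4 * lam) :
    ∑ i ∈ posGood p good, (p (i + 1) - p i) ≤
      3/4 * lam + ∑ r ∈ Ico 1 #(posGood p good), (lam / r) ^ (1 + ρ)⁻¹ := by
  have hlam : 0 ≤ lam := hp0 ▸ hpn ▸ hp (Nat.zero_le n)
  refine sum_le_add_sum_Ico_of_forall_min_le _ _ _ (by positivity)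
    (fun i hi => hgood i (mem_filter.1 hi).2.1) fun t ht hcard i hi hmin => ?_
  have hℓ (j : Fin n) : 0 ≤ p (j + 1) - p j := sub_nonneg.2 (hp (Nat.le_succ j))
  have hchain := card_sub_one_mul_le_sub ⟨i, hi⟩ (f := fun j : Fin n => p j) (lo := 0) (hi := lam)
    (g := (p (i + 1) - p i) ^ ((1:ℝ) + ρ))
    (fun x hx y hy hxy => by
      have hmin' : (p (i + 1) - p i) ^ ((1:ℝ) + ρ) ≤
          (min (p (x + 1) - p x) (p (y + 1) - p y)) ^ ((1:ℝ) + ρ) :=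
        Real.rpow_le_rpow (hℓ i) (le_min (hmin x hx) (hmin y hy)) (by positivity)
      have hx := (mem_filter.1 (ht hx)).2
      have hy := (mem_filter.1 (ht hy)).2
      linarith [hgap x y hx.1 hy.1 hxy, hp (Nat.le_succ x)])
    (fun x _ => hp0 ▸ hp (Nat.zero_le x)) (fun x _ => hpn ▸ hp x.isLt.le)
  have hcard' : (0 : ℝ) < ((#t - 1 : ℕ) : ℝ) := by exact_mod_cast (by omega)
  rw [Real.le_rpow_inv_iff_of_pos (hℓ i) (by positivity) (by positivity), le_div_iff₀ hcard',
    Nat.cast_pred (by omega)]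
  linarith

end IntervalPartition

theorem sum_Ico_div_rpow_le {β lam : ℝ} (hβ0 : 0 < β) (hβ1 : β ≤ 1) (hlam : 0 ≤ lam) (N : ℕ) :
    ∑ r ∈ Ico 1 N, (lam / r) ^ (1 - β) ≤ lam ^ (1 - β) * ((N - 1 : ℕ) : ℝ) ^ β / β := by
  have hIco : Ico 1 N = Icc 1 (N - 1) := by ext; simp; omega
  have hterm : ∀ r ∈ Icc 1 (N - 1), (lam / r) ^ (1 - β) = lam ^ (1 - β) * (r : ℝ) ^ (β - 1) := by
    intro r _
    rw [Real.div_rpow hlam (Nat.cast_nonneg r), div_eq_mul_inv,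
      ← Real.rpow_neg (Nat.cast_nonneg r), neg_sub]
  rw [hIco, sum_congr rfl hterm, ← mul_sum, mul_div_assoc]
  exact mul_le_mul_of_nonneg_left (sum_Icc_rpow_sub_one_le hβ0 hβ1 _) (by positivity)

theorem rpow_inv_mul_le_of_le_add_rpow {β lam B : ℝ} (hβ0 : 0 < β) (hβ1 : β ≤ 1) (hlam : 0 < lam)
    (hB : 0 ≤ B) (h : lam ≤ 3/4 * lam + lam ^ (1 - β) * B ^ β / β + B) :
    (β / 8) ^ β⁻¹ * lam ≤ B := by
  set θ := (β / 8) ^ β⁻¹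
  have hθβ : θ ^ β = β / 8 := Real.rpow_inv_rpow (by positivity) hβ0.ne'
  have hθ : θ ≤ β / 8 := by
    simpa using Real.rpow_le_rpow_of_exponent_ge (x := β / 8) (by positivity) (by linarith)
      ((one_le_inv₀ hβ0).2 hβ1)
  by_contra! hlt
  have hBβ : lam ^ (1 - β) * B ^ β ≤ β / 8 * lam := calc
    lam ^ (1 - β) * B ^ β ≤ lam ^ (1 - β) * (θ * lam) ^ β := by gcongr
    _ = θ ^ β * (lam ^ (1 - β) * lam ^ β) := by
      rw [Real.mul_rpow (by positivity) hlam.le]; ring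
    _ = β / 8 * lam := by rw [hθβ, ← Real.rpow_add hlam, sub_add_cancel, Real.rpow_one]
  have : lam ^ (1 - β) * B ^ β / β ≤ lam / 8 := by rw [div_le_iff₀ hβ0]; linarith
  nlinarith

/-- Existence of large intervals, Solovay / Ratner.
Given `ρ ∈ (0,1)`, there is `θ = θ(ρ) ∈ (0,1)` such that: whenever an interval of
length `λ > 1` is partitioned into finitely many consecutive subintervals
`J i = [a i, b i]` (so `a 0 = 0`, `b i = a (i+1)`, `b (n-1) = λ`), each labelled
good or bad, with
(1) any two good intervals `J i, J j` (`i < j`) satisfying the effective-gap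
    condition `a j - b i ≥ (min (|J i|) (|J j|))^(1+ρ)`,
(2) every good interval of length at most `(3/4)·λ`, and
(3) every bad interval of length at least `1`,
then the total length of the bad intervals is at least `θ·λ`. -/
theorem stmt0 (ρ : ℝ) (hρ : ρ ∈ Set.Ioo (0:ℝ) 1) :
    ∃ θ ∈ Set.Ioo (0:ℝ) 1,
      ∀ (lam : ℝ), 1 < lam →
      ∀ (n : ℕ), 0 < n →
      ∀ (a b : Fin n → ℝ) (good : Fin n → Bool),
        (∀ i, a i ≤ b i) →
        (∀ i : Fin n, ∀ h : (i : ℕ) + 1 < n, b i = a ⟨(i : ℕ) + 1, h⟩) →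
        (∀ i : Fin n, (i : ℕ) = 0 → a i = 0) →
        (∀ i : Fin n, (i : ℕ) = n - 1 → b i = lam) →
        (∀ i j : Fin n, good i = true → good j = true → i < j →
          (min (b i - a i) (b j - a j)) ^ ((1:ℝ) + ρ) ≤ a j - b i) →
        (∀ i, good i = true → b i - a i ≤ (3/4) * lam) →
        (∀ i, good i = false → 1 ≤ b i - a i) →
        θ * lam ≤ ∑ i ∈ Finset.univ.filter (fun i => good i = false), (b i - a i) := by
  have hρ0 := hρ.1
  set β := ρ / (1 + ρ)
  have hβ0 : 0 < β := by positivity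
  have hβ1 : β < 1 := by rw [div_lt_one (by linarith)]; linarith
  have hexp : (1 + ρ)⁻¹ = 1 - β := by simp only [β]; field_simp; ring
  refine ⟨(β / 8) ^ β⁻¹, ⟨by positivity, Real.rpow_lt_one (by positivity) (by linarith)
    (by positivity)⟩, ?_⟩
  intro lam hlam n hn a b good hab hcons h0 hlast hgap hgood hbad
  obtain ⟨p, hp, hp0, hpn, rfl, rfl⟩ := exists_partition_points hn hab hcons h0 hlast
  beta_reduce at hgap hgood hbad ⊢
  set B := ∑ i ∈ univ.filter (fun i => good i = false), (p (i + 1) - p i)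
  have hB : (#(univ.filter fun i => good i = false) : ℝ) ≤ B := by
    simpa only [nsmul_eq_mul, mul_one] using
      card_nsmul_le_sum (univ.filter fun i => good i = false) _ 1
        fun i hi => hbad i (mem_filter.1 hi).2
  have hcard := card_posGood_le_card_bad_add_one hgap
  have hB_pow : ((#(posGood p good) - 1 : ℕ) : ℝ) ^ β ≤ B ^ β :=
    Real.rpow_le_rpow (Nat.cast_nonneg _) ((Nat.cast_le.2 (by omega)).trans hB) hβ0.le
  have hgood_sum := sum_posGood_le hρ0 hp hp0 hpn hgap hgood
  rw [hexp] at hgood_sum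
  have hharm := sum_Ico_div_rpow_le hβ0 hβ1.le (by linarith) #(posGood p good) (lam := lam)
  have htotal := sum_posGood_add_sum_bad (good := good) hp
  rw [hp0, hpn, sub_zero] at htotal
  refine rpow_inv_mul_le_of_le_add_rpow hβ0 hβ1.le (by linarith) ((Nat.cast_nonneg _).trans hB) ?_
  have : lam ^ (1 - β) * ((#(posGood p good) - 1 : ℕ) : ℝ) ^ β / β ≤
      lam ^ (1 - β) * B ^ β / β := by
    gcongr
  linarith
end

section
/- (Convergence of the branching norm series) Let ν > 1/2 and s ≥ 0. Then there is a constant C > 1 such that for all integers l ≥ 0, C⁻¹ ≤ Σ_{k≥0} (1+l)^{2ν+2s−1}·(1+l+2k)^{−2ν−2s}·(1+l+2k)·(1+2l+2k)^{−1/2}·(1+2k)^{−1/2} ≤ C, i.e. the series is bounded above and below by positive constants independent of l. -/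
/-!
Put `α = 2ν + 2s - 1 > 0`. The `k`-th term is at most `(1 + l)^(-1/2) (1 + 2k)^(-1/2)`, and
`∑_{k ≤ l} (1 + 2k)^(-1/2) ≤ √(2(l + 1))`, so the terms with `k ≤ l` contribute at most `√2`.
It is also at most `(1 + l)^α (1 + 2k)^(-(α + 1))`; by the tangent-line bound for `x ↦ x^(-α)`
this telescopes against `(1 + 2k)^(-α)`, so the terms with `k > l` contribute at most `1/(2α)`.
Conversely each of the `l + 1` terms with `k ≤ l` is at least `(3^α (1 + 4l))⁻¹`, so the sum is
at least `(4 · 3^α)⁻¹`.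
-/

open Finset Real

lemma one_add_mul_one_sub_le_rpow_neg {y α : ℝ} (hy : 0 < y) (hα : 0 ≤ α) :
    1 + α * (1 - y) ≤ y ^ (-α) := by
  rw [rpow_def_of_pos hy]
  nlinarith [log_le_sub_one_of_pos hy, add_one_le_exp (log y * -α)]

lemma mul_sub_mul_rpow_neg_succ_le {a b α : ℝ} (ha : 0 < a) (hb : 0 < b) (hα : 0 ≤ α) :
    α * (b - a) * b ^ (-(α + 1)) ≤ a ^ (-α) - b ^ (-α) := by
  have hbα : 0 < b ^ (-α) := rpow_pos_of_pos hb _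
  have hsplit : a ^ (-α) = (a / b) ^ (-α) * b ^ (-α) := by
    rw [div_rpow ha.le hb.le, div_mul_cancel₀ _ hbα.ne']
  have hpow : b ^ (-(α + 1)) = b ^ (-α) / b := by
    rw [neg_add, rpow_add hb, rpow_neg_one, div_eq_mul_inv]
  rw [hsplit, hpow]
  calc α * (b - a) * (b ^ (-α) / b) = (1 + α * (1 - a / b)) * b ^ (-α) - b ^ (-α) := by
        field_simp; ring
    _ ≤ (a / b) ^ (-α) * b ^ (-α) - b ^ (-α) := by
        gcongr; exact one_add_mul_one_sub_le_rpow_neg (div_pos ha hb) hα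

lemma inv_sqrt_le_sqrt_add_one_sub_sqrt_sub_one {x : ℝ} (hx : 1 ≤ x) :
    (√x)⁻¹ ≤ √(x + 1) - √(x - 1) := by
  have hp := sq_sqrt (show 0 ≤ x + 1 by linarith)
  have hq := sq_sqrt (show 0 ≤ x - 1 by linarith)
  have hs := sq_sqrt (show 0 ≤ x by linarith)
  have hsx : 0 < √x := sqrt_pos.mpr (by linarith)
  -- `(√(x+1) - √(x-1)) (√(x+1) + √(x-1)) = 2` and `√(x+1) + √(x-1) ≤ 2√x` by concavity
  have hsum : √(x + 1) + √(x - 1) ≤ 2 * √x := by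
    nlinarith [sqrt_nonneg (x + 1), sqrt_nonneg (x - 1), sq_nonneg (√(x + 1) - √(x - 1))]
  have hpq : √(x - 1) ≤ √(x + 1) := sqrt_le_sqrt (by linarith)
  rw [inv_le_iff_one_le_mul₀ hsx]
  nlinarith [mul_le_mul_of_nonneg_left hsum (sub_nonneg.mpr hpq)]

lemma sum_range_rpow_neg_half_le (n : ℕ) :
    ∑ k ∈ range n, (1 + 2 * (k : ℝ)) ^ (-(1 / 2 : ℝ)) ≤ √(2 * n) := by
  calc ∑ k ∈ range n, (1 + 2 * (k : ℝ)) ^ (-(1 / 2 : ℝ))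
      ≤ ∑ k ∈ range n, (√(2 * ((k + 1 : ℕ) : ℝ)) - √(2 * k)) := by
        refine sum_le_sum fun k _ => ?_
        have h := inv_sqrt_le_sqrt_add_one_sub_sqrt_sub_one (x := 1 + 2 * k)
          (by linarith [k.cast_nonneg (α := ℝ)])
        rw [rpow_neg (by positivity), ← sqrt_eq_rpow]
        rwa [show 1 + 2 * (k : ℝ) + 1 = 2 * ((k + 1 : ℕ) : ℝ) by push_cast; ring,
          add_sub_cancel_left] at h
    _ = √(2 * n) := by rw [sum_range_sub (fun k => √(2 * (k : ℝ)))]; simp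

lemma sum_range_rpow_neg_succ_le {α c : ℝ} (hα : 0 < α) (hc : 0 < c) (N : ℕ) :
    ∑ j ∈ range N, (c + 2 + 2 * j) ^ (-(α + 1)) ≤ c ^ (-α) / (2 * α) := by
  set g : ℕ → ℝ := fun j => (c + 2 * j) ^ (-α)
  calc ∑ j ∈ range N, (c + 2 + 2 * j) ^ (-(α + 1))
      ≤ ∑ j ∈ range N, (g j - g (j + 1)) / (2 * α) := by
        refine sum_le_sum fun j _ => ?_
        have h := mul_sub_mul_rpow_neg_succ_le (a := c + 2 * j) (b := c + 2 + 2 * j)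
          (by positivity) (by positivity) hα.le
        rw [show c + 2 + 2 * (j : ℝ) - (c + 2 * j) = 2 by ring] at h
        rw [le_div_iff₀ (by positivity)]
        simp only [g]; push_cast
        rw [show c + 2 * ((j : ℝ) + 1) = c + 2 + 2 * j by ring]
        linarith
    _ = (g 0 - g N) / (2 * α) := by rw [← sum_div, sum_range_sub']
    _ ≤ c ^ (-α) / (2 * α) := by
        gcongr
        simp only [g, CharP.cast_eq_zero, mul_zero, add_zero, sub_le_self_iff]
        positivity

lemma rpow_mul_rpow_neg_le_one {x y α : ℝ} (hx : 0 ≤ x) (hxy : x ≤ y) (hα : 0 ≤ α) :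
    x ^ α * y ^ (-α) ≤ 1 := by
  have hy := hx.trans hxy
  rw [rpow_neg hy, ← div_eq_mul_inv, ← div_rpow hx hy]
  exact rpow_le_one (div_nonneg hx hy) (div_le_one_of_le₀ hxy hy) hα

lemma rpow_neg_half_mul_self {x : ℝ} (hx : 0 < x) :
    x ^ (-(1 / 2 : ℝ)) * x ^ (-(1 / 2 : ℝ)) = x⁻¹ := by
  rw [← rpow_add hx]; norm_num [rpow_neg_one]

/-- `α` stands for `2ν + 2s - 1`. -/
noncomputable def branchingTerm (α : ℝ) (l k : ℕ) : ℝ :=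
  ((1 : ℝ) + l) ^ α * ((1 : ℝ) + l + 2 * k) ^ (-α) * ((1 : ℝ) + 2 * l + 2 * k) ^ (-(1 / 2 : ℝ)) *
    ((1 : ℝ) + 2 * k) ^ (-(1 / 2 : ℝ))

lemma branchingTerm_eq (ν s : ℝ) (l k : ℕ) :
    ((1 : ℝ) + l) ^ (2 * ν + 2 * s - 1) * ((1 : ℝ) + l + 2 * k) ^ (-(2 * ν) - 2 * s) *
      ((1 : ℝ) + l + 2 * k) * ((1 : ℝ) + 2 * l + 2 * k) ^ (-(1 / 2 : ℝ)) *
      ((1 : ℝ) + 2 * k) ^ (-(1 / 2 : ℝ)) = branchingTerm (2 * ν + 2 * s - 1) l k := by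
  have hB : (0 : ℝ) < 1 + l + 2 * k := by positivity
  rw [branchingTerm, mul_assoc (_ ^ _) (_ ^ (-(2 * ν) - 2 * s)), ← rpow_add_one hB.ne']
  ring_nf

namespace branchingTerm

variable {α : ℝ} {l k : ℕ}

lemma nonneg (α : ℝ) (l k : ℕ) : 0 ≤ branchingTerm α l k := by
  unfold branchingTerm; positivity

lemma le_rpow_neg_half_mul (hα : 0 ≤ α) :
    branchingTerm α l k ≤ ((1 : ℝ) + l) ^ (-(1 / 2 : ℝ)) * ((1 : ℝ) + 2 * k) ^ (-(1 / 2 : ℝ)) := by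
  have hl : (0 : ℝ) ≤ l := l.cast_nonneg
  calc branchingTerm α l k
      ≤ 1 * ((1 : ℝ) + 2 * l + 2 * k) ^ (-(1 / 2 : ℝ)) * ((1 : ℝ) + 2 * k) ^ (-(1 / 2 : ℝ)) := by
        unfold branchingTerm
        gcongr ?_ * _ * _
        exact rpow_mul_rpow_neg_le_one (by positivity) (by linarith) hα
    _ ≤ 1 * ((1 : ℝ) + l) ^ (-(1 / 2 : ℝ)) * ((1 : ℝ) + 2 * k) ^ (-(1 / 2 : ℝ)) := by
        gcongr _ * ?_ * _
        exact rpow_le_rpow_of_nonpos (by positivity) (by linarith) (by norm_num)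
    _ = _ := by rw [one_mul]

lemma le_rpow_mul_rpow_neg_succ (hα : 0 ≤ α) :
    branchingTerm α l k ≤ ((1 : ℝ) + l) ^ α * ((1 : ℝ) + 2 * k) ^ (-(α + 1)) := by
  have hl : (0 : ℝ) ≤ l := l.cast_nonneg
  have hE : (0 : ℝ) < 1 + 2 * k := by positivity
  calc branchingTerm α l k
      ≤ ((1 : ℝ) + l) ^ α * ((1 : ℝ) + 2 * k) ^ (-α) * ((1 : ℝ) + 2 * k) ^ (-(1 / 2 : ℝ)) *
          ((1 : ℝ) + 2 * k) ^ (-(1 / 2 : ℝ)) := by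
        unfold branchingTerm
        gcongr _ * ?_ * ?_ * _
        · exact rpow_le_rpow_of_nonpos hE (by linarith) (by linarith)
        · exact rpow_le_rpow_of_nonpos hE (by linarith) (by norm_num)
    _ = ((1 : ℝ) + l) ^ α * ((1 : ℝ) + 2 * k) ^ (-(α + 1)) := by
        rw [mul_assoc _ (_ ^ (-(1 / 2 : ℝ))), rpow_neg_half_mul_self hE, mul_assoc,
          ← rpow_neg_one, ← rpow_add hE, neg_add]

lemma inv_rpow_mul_le (hα : 0 ≤ α) (hkl : k ≤ l) :
    ((3 : ℝ) ^ α * (1 + 4 * l))⁻¹ ≤ branchingTerm α l k := by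
  have hl : (0 : ℝ) ≤ l := l.cast_nonneg
  have hkl' : (k : ℝ) ≤ l := by exact_mod_cast hkl
  have hA : (0 : ℝ) < 1 + l := by positivity
  have h4l : (0 : ℝ) < 1 + 4 * l := by positivity
  have hAB : ((3 : ℝ) ^ α)⁻¹ ≤ ((1 : ℝ) + l) ^ α * ((1 : ℝ) + l + 2 * k) ^ (-α) := by
    calc ((3 : ℝ) ^ α)⁻¹ = ((1 : ℝ) + l) ^ α * (3 * (1 + l)) ^ (-α) := by
          rw [rpow_neg (by positivity), mul_rpow (by norm_num) hA.le, mul_inv, mul_left_comm,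
            mul_inv_cancel₀ (rpow_pos_of_pos hA α).ne', mul_one]
      _ ≤ ((1 : ℝ) + l) ^ α * ((1 : ℝ) + l + 2 * k) ^ (-α) := by
          gcongr _ * ?_
          exact rpow_le_rpow_of_nonpos (by positivity) (by linarith) (by linarith)
  have hDE : (1 + 4 * (l : ℝ))⁻¹ ≤
      ((1 : ℝ) + 2 * l + 2 * k) ^ (-(1 / 2 : ℝ)) * ((1 : ℝ) + 2 * k) ^ (-(1 / 2 : ℝ)) := by
    rw [← rpow_neg_half_mul_self h4l]
    gcongr ?_ * ?_ <;> exact rpow_le_rpow_of_nonpos (by positivity) (by linarith) (by norm_num)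
  rw [mul_inv, branchingTerm, mul_assoc _ (_ ^ (-(1 / 2 : ℝ)))]
  exact mul_le_mul hAB hDE (by positivity) (by positivity)

lemma sum_range_succ_le_sqrt_two (hα : 0 ≤ α) (l : ℕ) :
    ∑ k ∈ range (l + 1), branchingTerm α l k ≤ √2 := by
  have hA : (0 : ℝ) < 1 + l := by positivity
  calc ∑ k ∈ range (l + 1), branchingTerm α l k
      ≤ ((1 : ℝ) + l) ^ (-(1 / 2 : ℝ)) * ∑ k ∈ range (l + 1), ((1 : ℝ) + 2 * k) ^ (-(1 / 2 : ℝ)) := by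
        rw [mul_sum]; exact sum_le_sum fun k _ => le_rpow_neg_half_mul hα
    _ ≤ ((1 : ℝ) + l) ^ (-(1 / 2 : ℝ)) * √(2 * (1 + l)) := by
        gcongr
        have h := sum_range_rpow_neg_half_le (l + 1)
        rwa [Nat.cast_succ, add_comm (l : ℝ)] at h
    _ = √2 := by
        rw [rpow_neg hA.le, ← sqrt_eq_rpow, sqrt_mul zero_le_two,
          mul_comm, mul_assoc, mul_inv_cancel₀ (sqrt_pos.mpr hA).ne', mul_one]

lemma sum_range_add_le (hα : 0 < α) (l N : ℕ) :
    ∑ j ∈ range N, branchingTerm α l (l + 1 + j) ≤ (2 * α)⁻¹ := by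
  have hl : (0 : ℝ) ≤ l := l.cast_nonneg
  have hA : (0 : ℝ) < 1 + l := by positivity
  calc ∑ j ∈ range N, branchingTerm α l (l + 1 + j)
      ≤ ((1 : ℝ) + l) ^ α * ∑ j ∈ range N, ((1 + 2 * l) + 2 + 2 * (j : ℝ)) ^ (-(α + 1)) := by
        rw [mul_sum]
        refine sum_le_sum fun j _ => (le_rpow_mul_rpow_neg_succ hα.le).trans_eq ?_
        push_cast; rw [show (1 : ℝ) + 2 * (l + 1 + j) = 1 + 2 * l + 2 + 2 * j by ring]
    _ ≤ ((1 : ℝ) + l) ^ α * ((1 + 2 * l) ^ (-α) / (2 * α)) := by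
        gcongr
        exact sum_range_rpow_neg_succ_le hα (by positivity) N
    _ ≤ (2 * α)⁻¹ := by
        rw [← mul_div_assoc, div_eq_mul_inv]
        exact mul_le_of_le_one_left (by positivity)
          (rpow_mul_rpow_neg_le_one hA.le (by linarith) hα.le)

lemma sum_range_le (hα : 0 < α) (l N : ℕ) :
    ∑ k ∈ range N, branchingTerm α l k ≤ √2 + (2 * α)⁻¹ :=
  calc ∑ k ∈ range N, branchingTerm α l k
      ≤ ∑ k ∈ range (l + 1 + N), branchingTerm α l k :=
        sum_le_sum_of_subset_of_nonneg (range_subset_range.mpr (by omega))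
          fun k _ _ => nonneg α l k
    _ ≤ √2 + (2 * α)⁻¹ := by
        rw [sum_range_add]
        exact add_le_add (sum_range_succ_le_sqrt_two hα.le l) (sum_range_add_le hα l N)

lemma summable (hα : 0 < α) (l : ℕ) : Summable (branchingTerm α l) :=
  summable_of_sum_range_le (nonneg α l) (sum_range_le hα l)

lemma tsum_le (hα : 0 < α) (l : ℕ) : ∑' k, branchingTerm α l k ≤ √2 + (2 * α)⁻¹ :=
  tsum_le_of_sum_range_le (nonneg α l) (sum_range_le hα l)

lemma inv_le_tsum (hα : 0 < α) (l : ℕ) : (4 * (3 : ℝ) ^ α)⁻¹ ≤ ∑' k, branchingTerm α l k := by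
  have hl : (0 : ℝ) ≤ l := l.cast_nonneg
  have h3 : (0 : ℝ) < 3 ^ α := by positivity
  calc (4 * (3 : ℝ) ^ α)⁻¹ ≤ (l + 1 : ℕ) • ((3 : ℝ) ^ α * (1 + 4 * l))⁻¹ := by
        rw [nsmul_eq_mul, ← div_eq_mul_inv, le_div_iff₀ (by positivity), ← div_eq_inv_mul,
          div_le_iff₀ (by positivity)]
        push_cast; nlinarith
    _ ≤ ∑ k ∈ range (l + 1), branchingTerm α l k := by
        simpa using card_nsmul_le_sum (range (l + 1)) (branchingTerm α l) _
          fun k hk => inv_rpow_mul_le hα.le (Nat.lt_succ_iff.mp (mem_range.mp hk))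
    _ ≤ ∑' k, branchingTerm α l k := (summable hα l).sum_le_tsum _ fun k _ => nonneg α l k

end branchingTerm

/-- Convergence of the branching norm series: let `ν > 1/2` and
`s ≥ 0`.  The series
`Σ_{k≥0} (1+l)^{2ν+2s-1} (1+l+2k)^{-2ν-2s} (1+l+2k) (1+2l+2k)^{-1/2} (1+2k)^{-1/2}`
is convergent and bounded above and below by positive constants independent of
`l ≥ 0`. -/
theorem stmt16 (ν s : ℝ) (hν : 1 / 2 < ν) (hs : 0 ≤ s) :
    ∃ C > (1:ℝ), ∀ l : ℕ,
      Summable (fun k : ℕ =>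
        ((1 : ℝ) + l) ^ (2 * ν + 2 * s - 1) * ((1 : ℝ) + l + 2 * k) ^ (-(2 * ν) - 2 * s) *
          ((1 : ℝ) + l + 2 * k) * ((1 : ℝ) + 2 * l + 2 * k) ^ (-(1 / 2 : ℝ)) *
          ((1 : ℝ) + 2 * k) ^ (-(1 / 2 : ℝ))) ∧
      C⁻¹ ≤ ∑' k : ℕ,
        ((1 : ℝ) + l) ^ (2 * ν + 2 * s - 1) * ((1 : ℝ) + l + 2 * k) ^ (-(2 * ν) - 2 * s) *
          ((1 : ℝ) + l + 2 * k) * ((1 : ℝ) + 2 * l + 2 * k) ^ (-(1 / 2 : ℝ)) *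
          ((1 : ℝ) + 2 * k) ^ (-(1 / 2 : ℝ)) ∧
      (∑' k : ℕ,
        ((1 : ℝ) + l) ^ (2 * ν + 2 * s - 1) * ((1 : ℝ) + l + 2 * k) ^ (-(2 * ν) - 2 * s) *
          ((1 : ℝ) + l + 2 * k) * ((1 : ℝ) + 2 * l + 2 * k) ^ (-(1 / 2 : ℝ)) *
          ((1 : ℝ) + 2 * k) ^ (-(1 / 2 : ℝ))) ≤ C := by
  simp only [branchingTerm_eq]
  set α := 2 * ν + 2 * s - 1
  have hα : 0 < α := by linarith
  have h3 : 1 ≤ (3 : ℝ) ^ α := one_le_rpow (by norm_num) hα.le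
  have hsmall : 0 ≤ √2 + (2 * α)⁻¹ := by positivity
  refine ⟨4 * 3 ^ α + (√2 + (2 * α)⁻¹), by linarith, fun l => ⟨branchingTerm.summable hα l, ?_, ?_⟩⟩
  · exact (inv_anti₀ (by positivity) (by linarith)).trans (branchingTerm.inv_le_tsum hα l)
  · exact (branchingTerm.tsum_le hα l).trans (by linarith)
end
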